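/- For a k-homogeneous language L₁, a 0-homogeneous language L₂, b ∈ Σ₀ and any symbol α: α⁻¹(L₁ ·_b L₂) = (b⁻¹(L₁) ·_b L₂) ∘₁ b⁻¹(L₂) if α = b; α⁻¹(L₁) ·_b L₂ ∪ (b⁻¹(L₁) ·_b L₂) ∘₁ α⁻¹(L₂) if α ∈ Σ₀∖{b}; and α⁻¹(L₁) ·_b L₂ otherwise. -/

import Mathlib

inductive GTree (S : Type) (ar : S → ℕ) : Type where
  | eps (x : ℕ) : GTree S ar
  | node (f : S) (ts : Fin (ar f) → GTree S ar) : GTree S ar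

namespace GTree

variable {S : Type} {ar : S → ℕ}

/-- Substitute each ε-symbol `ε_x` by `σ x`. -/
def subst (σ : ℕ → GTree S ar) : GTree S ar → GTree S ar
  | eps x => σ x
  | node f ts => node f (fun i => subst σ (ts i))

/-- The multiset of ε-indices of a tree. -/
def epsIdx : GTree S ar → Multiset ℕ
  | eps x => {x}
  | node _ ts => ∑ i, epsIdx (ts i)

/-- `Inc_ε(z,t)`: increment every ε-index by `z`. -/
def inc (z : ℕ) (t : GTree S ar) : GTree S ar :=
  subst (fun x => eps (x + z)) t

/-- Composition `t ∘ (t₁,…,t_k)`: graft `ts_j` at the `j`-th smallest ε-index of `t`. -/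
def compo (t : GTree S ar) (ts : List (GTree S ar)) : GTree S ar :=
  subst (fun x => ts.getD ((Multiset.sort (epsIdx t) (· ≤ ·)).idxOf x) (eps x)) t

/-- The tree `α(ε₁,…,ε_k)` associated with a symbol `α`. -/
def symTree (f : S) : GTree S ar := node f (fun i => eps (i.1 + 1))

/-- Bottom-up quotient `d⁻¹(t)` of a tree `t` w.r.t. a tree `d`. -/
def quotT (d t : GTree S ar) : Set (GTree S ar) :=
  { u | epsIdx u = 1 ::ₘ (epsIdx t - epsIdx d).map (· + 1) ∧
        subst (fun j => if j = 1 then d else eps (j - 1)) u = t }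

/-- Bottom-up quotient `d⁻¹(L)` of a language w.r.t. a tree. -/
def quotL (d : GTree S ar) (L : Set (GTree S ar)) : Set (GTree S ar) :=
  ⋃ t ∈ L, quotT d t

def incL (z : ℕ) (L : Set (GTree S ar)) : Set (GTree S ar) := inc z '' L

/-- Composition of languages `L ∘ (L₁,…,L_k)`. -/
def compoL (L : Set (GTree S ar)) (Ls : List (Set (GTree S ar))) : Set (GTree S ar) :=
  { u | ∃ t ∈ L, ∃ ts : List (GTree S ar), List.Forall₂ (· ∈ ·) ts Ls ∧ u = compo t ts }

/-- Partial composition `t ∘₁ L'` at the first (smallest) ε-index. -/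
def pcomp (t : GTree S ar) (L' : Set (GTree S ar)) : Set (GTree S ar) :=
  { u | ∃ t' ∈ L', u = compo t (t' :: ((Multiset.sort (epsIdx t) (· ≤ ·)).tail).map eps) }

/-- Partial composition of languages `L ∘₁ L'`. -/
def pcompL (L L' : Set (GTree S ar)) : Set (GTree S ar) := ⋃ t ∈ L, pcomp t L'

/-- Tree substitution `t_{b ← L}` of the 0-ary symbol `b` by the language `L`. -/
def bsub [DecidableEq S] (b : S) (L : Set (GTree S ar)) : GTree S ar → Set (GTree S ar)
  | eps x => {eps x}
  | node f ts =>
      if f = b then L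
      else { u | ∃ us : Fin (ar f) → GTree S ar, (∀ i, us i ∈ bsub b L (ts i)) ∧ u = node f us }

/-- `b`-product `L₁ ·_b L₂`. -/
def prodB [DecidableEq S] (L₁ : Set (GTree S ar)) (b : S) (L₂ : Set (GTree S ar)) :
    Set (GTree S ar) :=
  ⋃ t ∈ L₁, bsub b L₂ t

/-- Iterated `b`-product `L^{n_b}`. -/
def iterB [DecidableEq S] (b : S) (L : Set (GTree S ar)) : ℕ → Set (GTree S ar)
  | 0 => {symTree b}
  | n + 1 => iterB b L n ∪ prodB L b (iterB b L n)

/-- `b`-closure `L^{*_b}`. -/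
def closB [DecidableEq S] (b : S) (L : Set (GTree S ar)) : Set (GTree S ar) :=
  ⋃ n, iterB b L n

/-- Iterated composition `L^{n∘}` of a 1-homogeneous language of ε-index `{x}`. -/
def iterC (x : ℕ) (L : Set (GTree S ar)) : ℕ → Set (GTree S ar)
  | 0 => {eps x}
  | n + 1 => iterC x L n ∪ pcompL (iterC x L n) L

/-- Composition closure `L^⊛`. -/
def closC (x : ℕ) (L : Set (GTree S ar)) : Set (GTree S ar) := ⋃ n, iterC x L n

end GTree

/-!
A tree `u ∈ α⁻¹(s)` is `s` with one occurrence of `α(ε₁,…,ε_k)` cut out and replaced by the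
hole `ε₁`. If `s ∈ t_{b←L₂}`, the cut occurrence either already lies in `t`, so that
`u ∈ v_{b←L₂}` for some `v ∈ α⁻¹(t)` (impossible for `α = b`, as every `b` of `t` has been
substituted), or it lies inside a tree `s' ∈ L₂` grafted at an occurrence of `b` in `t`; then `u`
is obtained by plugging some `t' ∈ α⁻¹(s')` into the hole of a tree of `b⁻¹(t) ·_b L₂`. Both
constructions are reversible. For `ar α ≥ 1` the second case is void: the trees of `L₂` have no
ε-leaves, so they contain no `α(ε₁,…,ε_k)`.
-/

namespace GTree

variable {S : Type} {ar : S → ℕ}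

instance : Inhabited (GTree S ar) := ⟨eps 0⟩

def quotSubst (d : GTree S ar) : ℕ → GTree S ar := fun j => if j = 1 then d else eps (j - 1)

def plugOne (t' : GTree S ar) : ℕ → GTree S ar := fun j => if j = 1 then t' else eps j

def IsPointed (u : GTree S ar) : Prop := (epsIdx u).count 1 = 1 ∧ (epsIdx u).count 0 = 0

theorem epsIdx_node (f : S) (ts : Fin (ar f) → GTree S ar) :
    epsIdx (node f ts) = ∑ i, epsIdx (ts i) := rfl

theorem epsIdx_le_node (f : S) (ts : Fin (ar f) → GTree S ar) (i : Fin (ar f)) :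
    epsIdx (ts i) ≤ epsIdx (node f ts) :=
  Finset.single_le_sum (f := fun i => epsIdx (ts i)) (fun _ _ => zero_le) (Finset.mem_univ i)

theorem epsIdx_add_le_node {f : S} (ts : Fin (ar f) → GTree S ar) {i j : Fin (ar f)} (h : i ≠ j) :
    epsIdx (ts i) + epsIdx (ts j) ≤ epsIdx (node f ts) := by
  rw [epsIdx_node, ← Finset.add_sum_erase _ _ (Finset.mem_univ i)]
  exact add_le_add_right (Finset.single_le_sum (f := fun i => epsIdx (ts i))
    (fun _ _ => zero_le) (Finset.mem_erase.2 ⟨h.symm, Finset.mem_univ j⟩)) _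

theorem epsIdx_node_update (f : S) (ts : Fin (ar f) → GTree S ar)
    (i : Fin (ar f)) (t : GTree S ar) :
    epsIdx (node f (Function.update ts i t)) + epsIdx (ts i) = epsIdx (node f ts) + epsIdx t := by
  simp only [epsIdx_node, Function.apply_update (fun _ => epsIdx)]
  rw [Finset.sum_update_of_mem (Finset.mem_univ i), Finset.sdiff_singleton_eq_erase,
    ← Finset.add_sum_erase _ _ (Finset.mem_univ i)]
  abel

theorem epsIdx_subst (σ : ℕ → GTree S ar) (t : GTree S ar) :
    epsIdx (subst σ t) = (epsIdx t).bind fun j => epsIdx (σ j) := by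
  induction t with
  | eps x => simp [subst, epsIdx]
  | node f ts ih =>
      simp only [subst, epsIdx_node, ih]
      exact (map_sum (⟨⟨(·.bind _), Multiset.zero_bind _⟩, fun _ _ => Multiset.add_bind _ _ _⟩ :
        Multiset ℕ →+ Multiset ℕ) _ _).symm

theorem epsIdx_subst_of_mem {σ : ℕ → GTree S ar} {t : GTree S ar} {a : ℕ} (ha : a ∈ epsIdx t) :
    epsIdx (subst σ t) = epsIdx (σ a) + ((epsIdx t).erase a).bind fun j => epsIdx (σ j) := by
  rw [epsIdx_subst, ← Multiset.cons_erase ha, Multiset.cons_bind, Multiset.erase_cons_head]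

theorem subst_subst (σ σ' : ℕ → GTree S ar) (t : GTree S ar) :
    subst σ (subst σ' t) = subst (fun x => subst σ (σ' x)) t := by
  induction t with
  | eps x => rfl
  | node f ts ih => simp [subst, ih]

theorem subst_congr {σ σ' : ℕ → GTree S ar} {t : GTree S ar}
    (h : ∀ j ∈ epsIdx t, σ j = σ' j) : subst σ t = subst σ' t := by
  induction t with
  | eps x => exact h x (Multiset.mem_singleton_self x)
  | node f ts ih =>
      simp only [subst, node.injEq, heq_eq_eq, true_and]
      exact funext fun i => ih i fun j hj => h j (Multiset.mem_of_le (epsIdx_le_node f ts i) hj)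

theorem subst_eps (t : GTree S ar) : subst eps t = t := by
  induction t with
  | eps x => rfl
  | node f ts ih => simp [subst, ih]

theorem subst_eq_self {σ : ℕ → GTree S ar} {t : GTree S ar}
    (h : ∀ j ∈ epsIdx t, σ j = eps j) : subst σ t = t :=
  (subst_congr h).trans (subst_eps t)

theorem subst_node_update {σ : ℕ → GTree S ar} {f : S} {vs ts : Fin (ar f) → GTree S ar}
    {i₀ : Fin (ar f)} {v₀ : GTree S ar} (hv₀ : subst σ v₀ = ts i₀)
    (hvs : ∀ i, i ≠ i₀ → subst σ (vs i) = ts i) :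
    subst σ (node f (Function.update vs i₀ v₀)) = node f ts :=
  congrArg (node f) <| funext <|
    (Function.forall_update_iff vs fun i x => subst σ x = ts i).2 ⟨hv₀, hvs⟩

theorem subst_quotSubst_of_one_notMem {u : GTree S ar} (h : 1 ∉ epsIdx u) (d : GTree S ar) :
    subst (quotSubst d) u = subst (fun j => eps (j - 1)) u :=
  subst_congr fun j hj => if_neg <| by rintro rfl; exact h hj

theorem node_eq_node_of_ar_eq_zero {f : S} (hf : ar f = 0) (ts ts' : Fin (ar f) → GTree S ar) :
    node f ts = node f ts' :=
  congrArg (node f) (funext fun i => absurd i.isLt (by omega))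

theorem IsPointed.one_mem {u : GTree S ar} (hu : IsPointed u) : 1 ∈ epsIdx u :=
  Multiset.count_pos.1 (by rw [hu.1]; exact one_pos)

theorem IsPointed.one_lt_of_mem_erase {u : GTree S ar} (hu : IsPointed u) {j : ℕ}
    (hj : j ∈ (epsIdx u).erase 1) : 1 < j := by
  have h1 : ((epsIdx u).erase 1).count 1 = 0 := by rw [Multiset.count_erase_self, hu.1]
  have h0 : j ≠ 0 := by
    rintro rfl
    exact Multiset.count_eq_zero.1 hu.2 (Multiset.mem_of_mem_erase hj)
  have : j ≠ 1 := by
    rintro rfl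
    exact Multiset.count_eq_zero.1 h1 hj
  omega

theorem eq_one_of_isPointed_eps {y : ℕ} (h : IsPointed (eps y : GTree S ar)) : y = 1 := by
  by_contra hy
  simp [IsPointed, epsIdx, Multiset.count_singleton, Ne.symm hy] at h

theorem IsPointed.exists_child {f : S} {ts : Fin (ar f) → GTree S ar} (h : IsPointed (node f ts)) :
    ∃ i₀, IsPointed (ts i₀) ∧ ∀ i, i ≠ i₀ → 1 ∉ epsIdx (ts i) := by
  obtain ⟨i₀, -, hi₀⟩ := Multiset.mem_sum.1 h.one_mem
  have hle : ∀ k i, (epsIdx (ts i)).count k ≤ (epsIdx (node f ts)).count k :=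
    fun k i => Multiset.count_le_of_le k (epsIdx_le_node f ts i)
  have hpos := Multiset.count_pos.2 hi₀
  refine ⟨i₀, ⟨by linarith [hle 1 i₀, h.1], by linarith [hle 0 i₀, h.2]⟩, fun i hi h1 => ?_⟩
  have := Multiset.count_le_of_le 1 (epsIdx_add_le_node ts (Ne.symm hi))
  rw [Multiset.count_add, h.1] at this
  linarith [Multiset.count_pos.2 h1]

theorem IsPointed.node_update {f : S} {ts : Fin (ar f) → GTree S ar} {i : Fin (ar f)}
    {t : GTree S ar} (h : IsPointed (node f ts)) (hi : IsPointed (ts i)) (ht : IsPointed t) :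
    IsPointed (node f (Function.update ts i t)) := by
  have hk k := congrArg (Multiset.count k) (epsIdx_node_update f ts i t)
  simp only [Multiset.count_add] at hk
  exact ⟨by linarith [hk 1, h.1, hi.1, ht.1], by linarith [hk 0, h.2, hi.2, ht.2]⟩

theorem epsIdx_subst_plugOne {w : GTree S ar} (hw : IsPointed w) (t' : GTree S ar) :
    epsIdx (subst (plugOne t') w) = epsIdx t' + (epsIdx w).erase 1 := by
  rw [epsIdx_subst_of_mem hw.one_mem, plugOne, if_pos rfl, Multiset.bind_congr
    (g := fun j => {j}) fun j hj => by simp [plugOne, (hw.one_lt_of_mem_erase hj).ne', epsIdx],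
    Multiset.bind_singleton, Multiset.map_id']

theorem isPointed_subst_plugOne_iff {w : GTree S ar} (hw : IsPointed w) (t' : GTree S ar) :
    IsPointed (subst (plugOne t') w) ↔ IsPointed t' := by
  have h1 : ((epsIdx w).erase 1).count 1 = 0 := by rw [Multiset.count_erase_self, hw.1]
  have h0 : ((epsIdx w).erase 1).count 0 = 0 := by
    rw [Multiset.count_erase_of_ne zero_ne_one, hw.2]
  simp only [IsPointed, epsIdx_subst_plugOne hw, Multiset.count_add, h1, h0, add_zero]

theorem IsPointed.sort_epsIdx {w : GTree S ar} (hw : IsPointed w) :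
    ∃ rest, Multiset.sort (epsIdx w) (· ≤ ·) = 1 :: rest ∧ 1 ∉ rest := by
  refine ⟨Multiset.sort ((epsIdx w).erase 1) (· ≤ ·), ?_,
    fun h => (hw.one_lt_of_mem_erase ((Multiset.mem_sort _).1 h)).false⟩
  conv_lhs => rw [← Multiset.cons_erase hw.one_mem]
  exact Multiset.sort_cons _ _ _ fun j hj => (hw.one_lt_of_mem_erase hj).le

theorem pcomp_of_isPointed {w : GTree S ar} (hw : IsPointed w) (L' : Set (GTree S ar)) :
    pcomp w L' = (fun t' => subst (plugOne t') w) '' L' := by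
  obtain ⟨rest, hsort, h1⟩ := hw.sort_epsIdx
  have hcompo t' : compo w (t' :: (Multiset.sort (epsIdx w) (· ≤ ·)).tail.map eps) =
      subst (plugOne t') w := by
    rw [compo, hsort]
    refine subst_congr fun j hj => ?_
    by_cases hj1 : j = 1
    · simp [hj1, plugOne]
    · have hjr : j ∈ Multiset.sort (epsIdx w) (· ≤ ·) := (Multiset.mem_sort _).2 hj
      rw [hsort, List.mem_cons, or_iff_right hj1] at hjr
      simp [List.idxOf_cons_ne _ (Ne.symm hj1), plugOne, hj1, hjr]
  ext u
  simp only [pcomp, hcompo, Set.mem_ofPred_eq, Set.mem_image, eq_comm]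

theorem mem_pcompL {L L' : Set (GTree S ar)} {u : GTree S ar} :
    u ∈ pcompL L L' ↔ ∃ w ∈ L, u ∈ pcomp w L' := by simp [pcompL]

theorem pcompL_empty (L : Set (GTree S ar)) : pcompL L ∅ = ∅ := by
  simp [pcompL, pcomp]

theorem epsIdx_subst_quotSubst {u : GTree S ar} (hu : IsPointed u) (d : GTree S ar) :
    epsIdx (subst (quotSubst d) u) = epsIdx d + ((epsIdx u).erase 1).map (· - 1) := by
  rw [epsIdx_subst_of_mem hu.one_mem, quotSubst, if_pos rfl, ← Multiset.bind_singleton]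
  congr 1
  refine Multiset.bind_congr fun j hj => ?_
  simp [quotSubst, (hu.one_lt_of_mem_erase hj).ne', epsIdx]

theorem zero_notMem_epsIdx_subst_quotSubst {d u : GTree S ar} (hd : 0 ∉ epsIdx d)
    (hu : 0 ∉ epsIdx u) : 0 ∉ epsIdx (subst (quotSubst d) u) := by
  rw [epsIdx_subst, Multiset.mem_bind]
  rintro ⟨j, hj, h0⟩
  have hj0 : j ≠ 0 := by rintro rfl; exact hu hj
  by_cases hj1 : j = 1
  · simp only [quotSubst, hj1, if_true] at h0
    exact hd h0
  · simp only [quotSubst, hj1, if_false, epsIdx, Multiset.mem_singleton] at h0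
    omega

theorem mem_quotT_iff {d s u : GTree S ar} (hd : 0 ∉ epsIdx d) :
    u ∈ quotT d s ↔ IsPointed u ∧ subst (quotSubst d) u = s := by
  change (epsIdx u = _ ∧ subst (quotSubst d) u = s) ↔ _
  constructor
  · rintro ⟨hidx, rfl⟩
    have hu0 : 0 ∉ epsIdx u := by simp [hidx]
    have hs0 := zero_notMem_epsIdx_subst_quotSubst hd hu0
    refine ⟨⟨?_, Multiset.count_eq_zero.2 hu0⟩, rfl⟩
    rw [hidx, Multiset.count_cons_self, Nat.add_eq_right, Multiset.count_eq_zero]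
    intro h1
    obtain ⟨j, hj, hj1⟩ := Multiset.mem_map.1 h1
    obtain rfl : j = 0 := by omega
    exact hs0 (Multiset.mem_of_le tsub_le_self hj)
  · rintro ⟨hu, rfl⟩
    refine ⟨?_, rfl⟩
    rw [epsIdx_subst_quotSubst hu, add_tsub_cancel_left, Multiset.map_map]
    conv_lhs => rw [← Multiset.cons_erase hu.one_mem]
    congr 1
    conv_lhs => rw [← Multiset.map_id' ((epsIdx u).erase 1)]
    exact Multiset.map_congr rfl fun j hj => by
      have := hu.one_lt_of_mem_erase hj
      simp only [Function.comp_apply]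
      omega

theorem zero_notMem_epsIdx_symTree (f : S) : 0 ∉ epsIdx (symTree f : GTree S ar) := by
  simp [symTree, epsIdx]

theorem mem_quotL_symTree {f : S} {L : Set (GTree S ar)} {u : GTree S ar} :
    u ∈ quotL (symTree f) L ↔ IsPointed u ∧ subst (quotSubst (symTree f)) u ∈ L := by
  simp [quotL, mem_quotT_iff (zero_notMem_epsIdx_symTree f)]

theorem quotL_symTree_eq_empty {f : S} (hf : 1 ≤ ar f) {L : Set (GTree S ar)}
    (hL : ∀ w ∈ L, epsIdx w = 0) : quotL (symTree f) L = ∅ := by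
  refine Set.eq_empty_iff_forall_notMem.2 fun u hu => ?_
  obtain ⟨hu, huL⟩ := mem_quotL_symTree.1 hu
  have h := congrArg Multiset.card (hL _ huL)
  simp [epsIdx_subst_quotSubst hu, symTree, epsIdx] at h
  omega

variable [DecidableEq S]

theorem bsub_node_self (b : S) (L : Set (GTree S ar)) (ts : Fin (ar b) → GTree S ar) :
    bsub b L (node b ts) = L := by simp [bsub]

theorem bsub_node_of_ne {b f : S} (hf : f ≠ b) (L : Set (GTree S ar))
    (ts : Fin (ar f) → GTree S ar) :
    bsub b L (node f ts) = {u | ∃ us, (∀ i, us i ∈ bsub b L (ts i)) ∧ u = node f us} := by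
  simp [bsub, hf]

theorem node_mem_bsub_node {b f : S} (hf : f ≠ b) {L : Set (GTree S ar)}
    {us ts : Fin (ar f) → GTree S ar} (h : ∀ i, us i ∈ bsub b L (ts i)) :
    node f us ∈ bsub b L (node f ts) := by
  rw [bsub_node_of_ne hf]
  exact ⟨us, h, rfl⟩

theorem node_update_mem_bsub_node_update {b f : S} (hf : f ≠ b) {L : Set (GTree S ar)}
    {us vs : Fin (ar f) → GTree S ar} {i₀ : Fin (ar f)} {w₀ v₀ : GTree S ar}
    (h₀ : w₀ ∈ bsub b L v₀) (h : ∀ i, i ≠ i₀ → us i ∈ bsub b L (vs i)) :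
    node f (Function.update us i₀ w₀) ∈ bsub b L (node f (Function.update vs i₀ v₀)) := by
  refine node_mem_bsub_node hf fun i => ?_
  rcases eq_or_ne i i₀ with rfl | hi
  · simpa using h₀
  · simpa [hi] using h i hi

theorem epsIdx_eq_of_mem_bsub {b : S} (hb : ar b = 0) {L : Set (GTree S ar)}
    (hL : ∀ w ∈ L, epsIdx w = 0) {t s : GTree S ar} (hs : s ∈ bsub b L t) :
    epsIdx s = epsIdx t := by
  induction t generalizing s with
  | eps x => rw [Set.mem_singleton_iff.1 hs]
  | node f ts ih =>
      by_cases hf : f = b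
      · subst hf
        rw [bsub_node_self] at hs
        rw [hL s hs, epsIdx_node, Finset.univ_eq_empty_iff.2 (by rw [hb]; infer_instance),
          Finset.sum_empty]
      · rw [bsub_node_of_ne hf] at hs
        obtain ⟨us, hus, rfl⟩ := hs
        exact Finset.sum_congr rfl fun i _ => ih i (hus i)

theorem isPointed_iff_of_mem_bsub {b : S} (hb : ar b = 0) {L : Set (GTree S ar)}
    (hL : ∀ w ∈ L, epsIdx w = 0) {t s : GTree S ar} (hs : s ∈ bsub b L t) :
    IsPointed s ↔ IsPointed t := by
  rw [IsPointed, IsPointed, epsIdx_eq_of_mem_bsub hb hL hs]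

theorem subst_mem_bsub_subst {b : S} {L : Set (GTree S ar)} (hL : ∀ w ∈ L, epsIdx w = 0)
    {σ ρ : ℕ → GTree S ar} (hρ : ∀ j, ρ j ∈ bsub b L (σ j)) {t s : GTree S ar}
    (hs : s ∈ bsub b L t) : subst ρ s ∈ bsub b L (subst σ t) := by
  induction t generalizing s with
  | eps x => rw [Set.mem_singleton_iff.1 hs]; exact hρ x
  | node f ts ih =>
      by_cases hf : f = b
      · subst hf
        rw [bsub_node_self] at hs
        rw [subst, bsub_node_self, subst_eq_self fun j hj => by simp [hL s hs] at hj]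
        exact hs
      · rw [bsub_node_of_ne hf] at hs
        obtain ⟨us, hus, rfl⟩ := hs
        exact node_mem_bsub_node hf fun i => ih i (hus i)

theorem eq_eps_of_eps_mem_bsub {b : S} {L : Set (GTree S ar)} (hL : ∀ w ∈ L, epsIdx w = 0)
    {t : GTree S ar} {x : ℕ} (h : eps x ∈ bsub b L t) : t = eps x := by
  cases t with
  | eps y => exact (Set.mem_singleton_iff.1 h).symm
  | node f ts =>
      by_cases hf : f = b
      · subst hf
        rw [bsub_node_self] at h
        simpa [epsIdx] using hL _ h
      · rw [bsub_node_of_ne hf] at h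
        obtain ⟨_, _, h⟩ := h
        cases h

theorem symTree_mem_bsub_node {b f g : S} (hg : g ≠ b) {L : Set (GTree S ar)}
    (hL : ∀ w ∈ L, epsIdx w = 0) {ts : Fin (ar g) → GTree S ar}
    (h : symTree f ∈ bsub b L (node g ts)) : f = g ∧ symTree f = node g ts := by
  rw [bsub_node_of_ne hg] at h
  obtain ⟨ss, hss, h⟩ := h
  cases h
  exact ⟨rfl, congrArg (node f) (funext fun i => (eq_eps_of_eps_mem_bsub hL (hss i)).symm)⟩

theorem exists_mem_bsub_of_subst_eps_mem_bsub {b : S} (hb : ar b = 0) {L : Set (GTree S ar)}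
    (hL : ∀ w ∈ L, epsIdx w = 0) (ρ : ℕ → ℕ) {t u : GTree S ar}
    (hu : subst (fun j => eps (ρ j)) u ∈ bsub b L t) :
    ∃ v, subst (fun j => eps (ρ j)) v = t ∧ u ∈ bsub b L v := by
  induction t generalizing u with
  | eps x =>
      cases u with
      | eps y => exact ⟨eps y, Set.mem_singleton_iff.1 hu, rfl⟩
      | node g us => cases Set.mem_singleton_iff.1 hu
  | node g ts ih =>
      by_cases hg : g = b
      · subst hg
        rw [bsub_node_self] at hu
        have hu0 : epsIdx u = 0 := by
          simpa [epsIdx_subst, epsIdx, Multiset.bind_singleton] using hL _ hu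
        rw [subst_eq_self fun j hj => by simp [hu0] at hj] at hu
        exact ⟨node g ts, node_eq_node_of_ar_eq_zero hb _ _, by rwa [bsub_node_self]⟩
      · rw [bsub_node_of_ne hg] at hu
        obtain ⟨ss, hss, hu⟩ := hu
        cases u with
        | eps y => cases hu
        | node g' us =>
            cases hu
            choose vs hvs hus using fun i => ih i (hss i)
            exact ⟨node g vs, congrArg (node g) (funext hvs), node_mem_bsub_node hg hus⟩

theorem exists_mem_bsub_of_one_notMem {b : S} (hb : ar b = 0) {L : Set (GTree S ar)}
    (hL : ∀ w ∈ L, epsIdx w = 0) {d t u : GTree S ar} (h1 : 1 ∉ epsIdx u)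
    (hu : subst (quotSubst d) u ∈ bsub b L t) :
    ∃ v, (∀ d', subst (quotSubst d') v = t) ∧ u ∈ bsub b L v := by
  rw [subst_quotSubst_of_one_notMem h1] at hu
  obtain ⟨v, hv, huv⟩ := exists_mem_bsub_of_subst_eps_mem_bsub hb hL (· - 1) hu
  refine ⟨v, fun d' => ?_, huv⟩
  rwa [subst_quotSubst_of_one_notMem (epsIdx_eq_of_mem_bsub hb hL huv ▸ h1)]

theorem exists_of_subst_quotSubst_mem_bsub {b : S} (hb : ar b = 0) {L : Set (GTree S ar)}
    (hL : ∀ w ∈ L, epsIdx w = 0) {f : S} {t u : GTree S ar} (hu : IsPointed u)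
    (hut : subst (quotSubst (symTree f)) u ∈ bsub b L t) :
    (f ≠ b ∧ ∃ v, subst (quotSubst (symTree f)) v = t ∧ u ∈ bsub b L v) ∨
      ∃ v w t', subst (quotSubst (symTree b)) v = t ∧ w ∈ bsub b L v ∧ IsPointed w ∧
        subst (quotSubst (symTree f)) t' ∈ L ∧ u = subst (plugOne t') w := by
  induction t generalizing u with
  | eps x =>
      cases u with
      | eps y => cases eq_one_of_isPointed_eps hu; cases Set.mem_singleton_iff.1 hut
      | node g us => cases Set.mem_singleton_iff.1 hut
  | node g ts ih =>
      by_cases hg : g = b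
      · subst hg
        rw [bsub_node_self] at hut
        refine .inr ⟨eps 1, eps 1, u, node_eq_node_of_ar_eq_zero hb _ _, rfl, ?_, hut, rfl⟩
        simp [IsPointed, epsIdx]
      cases u with
      | eps y =>
          cases eq_one_of_isPointed_eps hu
          obtain ⟨rfl, hts⟩ := symTree_mem_bsub_node hg hL hut
          exact .inl ⟨hg, eps 1, hts, rfl⟩
      | node g' us =>
          rw [bsub_node_of_ne hg] at hut
          obtain ⟨ss, hss, hus⟩ := hut
          cases hus
          obtain ⟨i₀, hu₀, hrest⟩ := hu.exists_child
          have hpre i (hi : i ≠ i₀) := exists_mem_bsub_of_one_notMem hb hL (hrest i hi) (hss i)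
          choose! vs hvs hus using hpre
          rcases ih i₀ hu₀ (hss i₀) with
            ⟨hfb, v₀, hv₀, hu₀v₀⟩ | ⟨v₀, w₀, t', hv₀, hw₀, hw₀p, ht', hu₀w₀⟩
          · refine .inl ⟨hfb, _, subst_node_update hv₀ fun i hi => hvs i hi _, ?_⟩
            simpa using node_update_mem_bsub_node_update hg hu₀v₀ hus
          · refine .inr ⟨_, _, t', subst_node_update hv₀ fun i hi => hvs i hi _,
              node_update_mem_bsub_node_update hg hw₀ hus, hu.node_update hu₀ hw₀p, ht',
              (subst_node_update hu₀w₀.symm fun i hi => ?_).symm⟩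
            exact subst_eq_self fun j hj => if_neg <| by rintro rfl; exact hrest i hi hj

theorem subst_quotSubst_mem_bsub_subst {b f : S} (hfb : f ≠ b) {L : Set (GTree S ar)}
    (hL : ∀ w ∈ L, epsIdx w = 0) {u v : GTree S ar} (hu : u ∈ bsub b L v) :
    subst (quotSubst (symTree f)) u ∈ bsub b L (subst (quotSubst (symTree f)) v) := by
  refine subst_mem_bsub_subst hL (fun j => ?_) hu
  by_cases hj : j = 1
  · simpa [quotSubst, hj, symTree] using node_mem_bsub_node hfb fun i => rfl
  · simp [quotSubst, hj, bsub]

theorem subst_quotSubst_subst_plugOne_mem_bsub {b f : S} {L : Set (GTree S ar)}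
    (hL : ∀ w ∈ L, epsIdx w = 0) {v w t' : GTree S ar} (hw : w ∈ bsub b L v)
    (ht' : subst (quotSubst (symTree f)) t' ∈ L) :
    subst (quotSubst (symTree f)) (subst (plugOne t') w) ∈
      bsub b L (subst (quotSubst (symTree b)) v) := by
  rw [subst_subst]
  refine subst_mem_bsub_subst hL (fun j => ?_) hw
  by_cases hj : j = 1
  · simpa [plugOne, quotSubst, hj, symTree, bsub_node_self] using ht'
  · simp [plugOne, quotSubst, hj, subst, bsub]

theorem mem_prodB {b : S} {L₁ L₂ : Set (GTree S ar)} {u : GTree S ar} :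
    u ∈ prodB L₁ b L₂ ↔ ∃ t ∈ L₁, u ∈ bsub b L₂ t := by simp [prodB]

theorem mem_quotL_symTree_prodB {b : S} (hb : ar b = 0) {L₁ L₂ : Set (GTree S ar)}
    (hL₂ : ∀ w ∈ L₂, epsIdx w = 0) {f : S} {u : GTree S ar} :
    u ∈ quotL (symTree f) (prodB L₁ b L₂) ↔
      (f ≠ b ∧ u ∈ prodB (quotL (symTree f) L₁) b L₂) ∨
        u ∈ pcompL (prodB (quotL (symTree b) L₁) b L₂) (quotL (symTree f) L₂) := by
  simp only [mem_quotL_symTree, mem_prodB, mem_pcompL]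
  constructor
  · rintro ⟨hu, t, ht, hut⟩
    rcases exists_of_subst_quotSubst_mem_bsub hb hL₂ hu hut with
      ⟨hfb, v, rfl, huv⟩ | ⟨v, w, t', rfl, hwv, hw, ht', rfl⟩
    · exact .inl ⟨hfb, v, ⟨(isPointed_iff_of_mem_bsub hb hL₂ huv).1 hu, ht⟩, huv⟩
    · refine .inr ⟨w, ⟨v, ⟨(isPointed_iff_of_mem_bsub hb hL₂ hwv).1 hw, ht⟩, hwv⟩, ?_⟩
      rw [pcomp_of_isPointed hw]
      exact ⟨t', mem_quotL_symTree.2 ⟨(isPointed_subst_plugOne_iff hw t').1 hu, ht'⟩, rfl⟩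
  · rintro (⟨hfb, v, ⟨hv, hvL⟩, huv⟩ | ⟨w, ⟨v, ⟨hv, hvL⟩, hwv⟩, hu⟩)
    · exact ⟨(isPointed_iff_of_mem_bsub hb hL₂ huv).2 hv, _, hvL,
        subst_quotSubst_mem_bsub_subst hfb hL₂ huv⟩
    · have hw := (isPointed_iff_of_mem_bsub hb hL₂ hwv).2 hv
      rw [pcomp_of_isPointed hw] at hu
      obtain ⟨t', ht', rfl⟩ := hu
      obtain ⟨ht', ht'L⟩ := mem_quotL_symTree.1 ht'
      exact ⟨(isPointed_subst_plugOne_iff hw t').2 ht', _, hvL,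
        subst_quotSubst_subst_plugOne_mem_bsub hL₂ hwv ht'L⟩

theorem quotL_symTree_prodB_self {b : S} (hb : ar b = 0) (L₁ : Set (GTree S ar))
    {L₂ : Set (GTree S ar)} (hL₂ : ∀ w ∈ L₂, epsIdx w = 0) :
    quotL (symTree b) (prodB L₁ b L₂) =
      pcompL (prodB (quotL (symTree b) L₁) b L₂) (quotL (symTree b) L₂) :=
  Set.ext fun _ => by simp [mem_quotL_symTree_prodB hb hL₂]

theorem quotL_symTree_prodB_of_ne {b f : S} (hb : ar b = 0) (hfb : f ≠ b)
    (L₁ : Set (GTree S ar)) {L₂ : Set (GTree S ar)} (hL₂ : ∀ w ∈ L₂, epsIdx w = 0) :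
    quotL (symTree f) (prodB L₁ b L₂) =
      prodB (quotL (symTree f) L₁) b L₂ ∪
        pcompL (prodB (quotL (symTree b) L₁) b L₂) (quotL (symTree f) L₂) :=
  Set.ext fun _ => by simp [mem_quotL_symTree_prodB hb hL₂, hfb]

end GTree

open GTree in
theorem quotient_alpha_of_bprod_lang_general {S : Type} {ar : S → ℕ} [DecidableEq S] (α b : S)
    (hb : ar b = 0) (L₁ L₂ : Set (GTree S ar))
    (hL₂ : ∀ t ∈ L₂, epsIdx t = 0) :
    (α = b →
      quotL (symTree b) (prodB L₁ b L₂) =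
        pcompL (prodB (quotL (symTree b) L₁) b L₂) (quotL (symTree b) L₂)) ∧
    (ar α = 0 → α ≠ b →
      quotL (symTree α) (prodB L₁ b L₂) =
        prodB (quotL (symTree α) L₁) b L₂ ∪
          pcompL (prodB (quotL (symTree b) L₁) b L₂) (quotL (symTree α) L₂)) ∧
    (1 ≤ ar α →
      quotL (symTree α) (prodB L₁ b L₂) = prodB (quotL (symTree α) L₁) b L₂) := by
  refine ⟨fun _ => quotL_symTree_prodB_self hb L₁ hL₂,
    fun _ hαb => quotL_symTree_prodB_of_ne hb hαb L₁ hL₂, fun hα => ?_⟩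
  have hαb : α ≠ b := by rintro rfl; omega
  rw [quotL_symTree_prodB_of_ne hb hαb L₁ hL₂, quotL_symTree_eq_empty hα hL₂, pcompL_empty,
    Set.union_empty]

open GTree in
/-- quotient of a `b`-product of languages `L₁ ·_b L₂` by a symbol `α`. -/
theorem quotient_alpha_of_bprod_lang {S : Type} {ar : S → ℕ} [DecidableEq S] (α b : S)
    (hb : ar b = 0) (R : Finset ℕ) (L₁ L₂ : Set (GTree S ar))
    (hL₁ : ∀ t ∈ L₁, epsIdx t = R.val) (hL₂ : ∀ t ∈ L₂, epsIdx t = 0) :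
    (α = b →
      quotL (symTree b) (prodB L₁ b L₂) =
        pcompL (prodB (quotL (symTree b) L₁) b L₂) (quotL (symTree b) L₂)) ∧
    (ar α = 0 → α ≠ b →
      quotL (symTree α) (prodB L₁ b L₂) =
        prodB (quotL (symTree α) L₁) b L₂ ∪
          pcompL (prodB (quotL (symTree b) L₁) b L₂) (quotL (symTree α) L₂)) ∧
    (1 ≤ ar α →
      quotL (symTree α) (prodB L₁ b L₂) = prodB (quotL (symTree α) L₁) b L₂) :=
  quotient_alpha_of_bprod_lang_general α b hb L₁ L₂ hL₂
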